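/- For every real u with 0 < u < 1, one has (1 − u)·cot(πu) ≥ −1/π; equivalently, the function g(u) = −(1 − u)·cot(πu) − 1/π satisfies g(u) ≤ 0 on (0, 1). -/
import Mathlib


/-- For `0 < u < 1` one has `(1-u)cot(πu) ≥ -1/π`; equivalently,
`g(u) = -(1-u)cot(πu) - 1/π` satisfies `g(u) ≤ 0` on `(0,1)`. -/
theorem g_nonpos (u : ℝ) (hu₀ : 0 < u) (hu₁ : u < 1) :
    (1 - u) * Real.cot (Real.pi * u) ≥ -(1 / Real.pi) ∧
      -(1 - u) * Real.cot (Real.pi * u) - 1 / Real.pi ≤ 0 := by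
  have hπ := Real.pi_pos
  have key : (1 - u) * Real.cot (Real.pi * u) ≥ -(1 / Real.pi) := by
    rcases le_or_gt u (1/2) with h | h
    · have hs : 0 < Real.sin (Real.pi * u) :=
        Real.sin_pos_of_pos_of_lt_pi (by positivity) (by nlinarith)
      have hc : 0 ≤ Real.cos (Real.pi * u) :=
        Real.cos_nonneg_of_mem_Icc ⟨by nlinarith, by nlinarith⟩
      have hcot : 0 ≤ Real.cot (Real.pi * u) := by
        rw [Real.cot_eq_cos_div_sin]; positivity
      have h1 : 0 ≤ (1 - u) * Real.cot (Real.pi * u) :=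
        mul_nonneg (by linarith) hcot
      have h2 : -(1 / Real.pi) < 0 := by
        simp only [neg_neg, neg_lt, neg_zero]; positivity
      linarith
    · have hv0 : 0 < 1 - u := by linarith
      have hvpos : 0 < Real.pi * (1 - u) := by positivity
      have hvlt : Real.pi * (1 - u) < Real.pi / 2 := by nlinarith
      have hcos : 0 < Real.cos (Real.pi * (1 - u)) :=
        Real.cos_pos_of_mem_Ioo ⟨by linarith, hvlt⟩
      have hsin : 0 < Real.sin (Real.pi * (1 - u)) :=
        Real.sin_pos_of_pos_of_lt_pi hvpos (by linarith)
      have htan : Real.pi * (1 - u) < Real.tan (Real.pi * (1 - u)) :=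
        Real.lt_tan hvpos hvlt
      rw [Real.tan_eq_sin_div_cos, lt_div_iff₀ hcos] at htan
      have heq : Real.pi * u = Real.pi - Real.pi * (1 - u) := by ring
      rw [ge_iff_le, heq, Real.cot_eq_cos_div_sin, Real.sin_pi_sub, Real.cos_pi_sub]
      rw [neg_div, mul_neg, neg_le_neg_iff, ← mul_div_assoc,
        div_le_div_iff₀ hsin hπ]
      nlinarith
  exact ⟨key, by linarith⟩
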